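/- (Proposition 2(i)) Let X₁, …, X_k be a linearly independent family in 𝔽₂ⁿ and let f : 𝔽₂ⁿ → 𝔽₂ satisfy the majority promise: for every q ∈ 𝔽₂ⁿ, 2·#{i ∈ {1,…,k} : f(q) = q·Xᵢ} ≥ k. Then Σᵢ₌₁ᵏ C_{Xᵢ}(f)² ≥ N² · p_k, where N = 2ⁿ and p_k = (k / 2^(2(k−1))) · binom(k−1, ⌈(k−1)/2⌉)². -/

import Mathlib

/-- The inner product of two vectors in `𝔽₂ⁿ`. -/
def dotp {n : ℕ} (q X : Fin n → ZMod 2) : ZMod 2 := ∑ i, q i * X i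

/-- The Deutsch–Jozsa coefficient `C_j(f) = #{q : j·q = f q} − #{q : j·q ≠ f q}`. -/
def coefC {n : ℕ} (f : (Fin n → ZMod 2) → ZMod 2) (j : Fin n → ZMod 2) : ℤ :=
  ((Finset.univ.filter (fun q : Fin n → ZMod 2 => dotp j q = f q)).card : ℤ) -
  ((Finset.univ.filter (fun q : Fin n → ZMod 2 => dotp j q ≠ f q)).card : ℤ)

/-- `p_k = (k / 2^(2(k−1))) · binom(k−1, ⌈(k−1)/2⌉)²`
(note `⌈(k−1)/2⌉ = k/2` with natural-number division). -/
noncomputable def pSeq (k : ℕ) : ℚ :=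
  ((k : ℚ) / 2 ^ (2 * (k - 1))) * (Nat.choose (k - 1) (k / 2) : ℚ) ^ 2

open Finset

namespace Prop2Aux

lemma zmod2_cases (x : ZMod 2) : x = 0 ∨ x = 1 := by revert x; decide

lemma dotp_comm {n : ℕ} (q X : Fin n → ZMod 2) : dotp q X = dotp X q :=
  Finset.sum_congr rfl fun i _ => mul_comm _ _

lemma dotp_single {n : ℕ} (j : Fin n) (v : Fin n → ZMod 2) :
    dotp (Pi.single j 1) v = v j := by
  unfold dotp
  rw [Finset.sum_eq_single j]
  · simp
  · intro i _ hi; simp [Pi.single_apply, hi]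
  · simp

/-- The linear map `q ↦ (q·X₁, …, q·X_k)`. -/
def phiMap {n k : ℕ} (X : Fin k → (Fin n → ZMod 2)) :
    (Fin n → ZMod 2) →ₗ[ZMod 2] (Fin k → ZMod 2) where
  toFun q := fun i => dotp q (X i)
  map_add' q r := by
    funext i; simp [dotp, add_mul, Finset.sum_add_distrib]
  map_smul' c q := by
    funext i; simp [dotp, Finset.mul_sum, mul_assoc]

lemma phiMap_apply {n k : ℕ} (X : Fin k → (Fin n → ZMod 2)) (q : Fin n → ZMod 2) (i : Fin k) :
    phiMap X q i = dotp q (X i) := rfl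

lemma phi_surj {n k : ℕ} (X : Fin k → (Fin n → ZMod 2))
    (hX : LinearIndependent (ZMod 2) X) : Function.Surjective (phiMap X) := by
  rw [← LinearMap.range_eq_top]
  by_contra hne
  obtain ⟨g, hg0, hgbot⟩ :=
    Submodule.exists_dual_map_eq_bot_of_lt_top (lt_top_iff_ne_top.2 hne) inferInstance
  set c : Fin k → ZMod 2 := fun i => g (Pi.single i 1) with hc
  have hgc : ∀ w : Fin k → ZMod 2, g w = ∑ i, w i * c i := by
    intro w
    conv_lhs => rw [pi_eq_sum_univ w]
    rw [map_sum]
    refine Finset.sum_congr rfl fun i _ => ?_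
    rw [map_smul, smul_eq_mul, hc]
    congr 2
    funext j
    simp [Pi.single_apply, eq_comm]
  have hker : ∀ q, g (phiMap X q) = 0 := by
    intro q
    have hmem : g (phiMap X q) ∈ (LinearMap.range (phiMap X)).map g :=
      Submodule.mem_map_of_mem ⟨q, rfl⟩
    rw [hgbot] at hmem
    simpa using hmem
  have hsum0 : ∑ i, c i • X i = 0 := by
    funext j
    have h := hker (Pi.single j 1)
    rw [hgc] at h
    have : ∀ i, phiMap X (Pi.single j 1) i * c i = c i * X i j := by
      intro i
      rw [phiMap_apply, dotp_single]
      ring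
    rw [Finset.sum_congr rfl fun i _ => this i] at h
    simpa [Finset.sum_apply] using h
  have hc0 : ∀ i, c i = 0 := Fintype.linearIndependent_iff.1 hX c hsum0
  exact hg0 (LinearMap.ext fun w => by rw [hgc]; simp [hc0])

lemma fiber_card_eq {n k : ℕ} (φ : (Fin n → ZMod 2) →ₗ[ZMod 2] (Fin k → ZMod 2))
    (v : Fin k → ZMod 2) (q₀ : Fin n → ZMod 2) (hq₀ : φ q₀ = v) :
    (univ.filter fun q => φ q = v).card = (univ.filter fun q => φ q = 0).card := by
  apply Finset.card_bij' (i := fun q _ => q - q₀) (j := fun q _ => q + q₀)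
  · intro q hq
    simp only [mem_filter, mem_univ, true_and] at hq ⊢
    rw [map_sub, hq, hq₀, sub_self]
  · intro q hq
    simp only [mem_filter, mem_univ, true_and] at hq ⊢
    rw [map_add, hq, hq₀, zero_add]
  · intro q _; abel
  · intro q _; abel

/-- weight = number of ones -/
def wt {k : ℕ} (v : Fin k → ZMod 2) : ℕ := (univ.filter fun i => v i = 1).card

lemma card_wt_eq {k : ℕ} (j : ℕ) :
    (univ.filter fun v : Fin k → ZMod 2 => wt v = j).card = k.choose j := by
  have hpc : (Finset.powersetCard j (univ : Finset (Fin k))).card = k.choose j := by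
    rw [Finset.card_powersetCard]; simp
  rw [← hpc]
  apply Finset.card_bij (i := fun v _ => univ.filter fun i => v i = 1)
  · intro v hv
    simp only [mem_filter, mem_univ, true_and] at hv
    rw [Finset.mem_powersetCard]
    exact ⟨Finset.subset_univ _, hv⟩
  · intro v hv w hw h
    funext i
    have hi : (i ∈ univ.filter fun i => v i = 1) ↔ (i ∈ univ.filter fun i => w i = 1) := by
      rw [h]
    simp only [mem_filter, mem_univ, true_and] at hi
    rcases zmod2_cases (v i) with h1 | h1 <;> rcases zmod2_cases (w i) with h2 | h2 <;>
      simp_all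
  · intro s hs
    rw [Finset.mem_powersetCard] at hs
    refine ⟨fun i => if i ∈ s then 1 else 0, ?_, ?_⟩
    · rw [mem_filter]
      refine ⟨mem_univ _, ?_⟩
      rw [← hs.2]
      unfold wt
      congr 1
      ext i
      simp only [mem_filter, mem_univ, true_and]
      by_cases hi : i ∈ s <;> simp [hi]
    · ext i
      simp only [mem_filter, mem_univ, true_and]
      by_cases hi : i ∈ s <;> simp [hi]

lemma sum_over_vecs {k : ℕ} (g : ℕ → ℤ) :
    ∑ v : Fin k → ZMod 2, g (wt v) = ∑ j ∈ range (k + 1), (k.choose j : ℤ) * g j := by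
  rw [← Finset.sum_fiberwise_of_maps_to' (t := range (k + 1)) (g := wt)
    (fun v _ => by
      rw [mem_range, Nat.lt_succ_iff]
      exact le_trans (Finset.card_filter_le _ _) (by simp))]
  refine Finset.sum_congr rfl fun j _ => ?_
  rw [Finset.sum_const, ← card_wt_eq (k := k) j]
  simp [mul_comm]

/-- telescoping step -/
lemma tele_step (k : ℕ) (hk : 1 ≤ k) (j : ℕ) :
    ((k : ℤ) - 2 * j) * k.choose j =
      (k : ℤ) * (k - 1).choose j -
        (if j = 0 then 0 else (k : ℤ) * (k - 1).choose (j - 1)) := by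
  obtain ⟨k', rfl⟩ : ∃ k', k = k' + 1 := ⟨k - 1, by omega⟩
  cases j with
  | zero => simp
  | succ i =>
      simp only [Nat.succ_ne_zero, if_false, Nat.add_sub_cancel, Nat.succ_sub_one]
      have h1 : (k' + 1).choose (i + 1) = k'.choose i + k'.choose (i + 1) :=
        Nat.choose_succ_succ' k' i
      have h2 : (k' + 1) * k'.choose i = (k' + 1).choose (i + 1) * (i + 1) :=
        Nat.add_one_mul_choose_eq k' i
      have h1' : ((k' + 1).choose (i + 1) : ℤ) = k'.choose i + k'.choose (i + 1) := by
        exact_mod_cast congrArg Nat.cast h1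
      have h2' : ((k' : ℤ) + 1) * k'.choose i = (k' + 1).choose (i + 1) * (i + 1) := by
        exact_mod_cast congrArg Nat.cast h2
      push_cast
      push_cast at h1' h2'
      nlinarith [h1', h2']

lemma sum_G (k : ℕ) (hk : 1 ≤ k) :
    ∑ j ∈ range (k + 1), max ((k : ℤ) - 2 * j) 0 * k.choose j =
      (k : ℤ) * (k - 1).choose (k / 2) := by
  set m := k / 2 with hm
  have hmk : m + 1 ≤ k + 1 := by omega
  have hzero : ∀ j ∈ range (k + 1), j ∉ range (m + 1) →
      max ((k : ℤ) - 2 * j) 0 * k.choose j = 0 := by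
    intro j _ hj
    rw [mem_range, Nat.lt_succ_iff, not_le] at hj
    have : (k : ℤ) - 2 * j ≤ 0 := by
      have : k < 2 * j := by omega
      push_cast
      omega
    rw [max_eq_right this, zero_mul]
  rw [← Finset.sum_subset (Finset.range_subset_range.2 hmk) hzero]
  have hstep : ∀ j ∈ range (m + 1),
      max ((k : ℤ) - 2 * j) 0 * k.choose j =
        ((k : ℤ) * (k - 1).choose j) -
          (if j = 0 then 0 else (k : ℤ) * (k - 1).choose (j - 1)) := by
    intro j hj
    rw [mem_range, Nat.lt_succ_iff] at hj
    have h2j : 2 * j ≤ k := by omega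
    have : (0 : ℤ) ≤ (k : ℤ) - 2 * j := by push_cast; omega
    rw [max_eq_left this, tele_step k hk j]
  set h : ℕ → ℤ := fun j => if j = 0 then 0 else (k : ℤ) * (k - 1).choose (j - 1) with hh
  calc ∑ j ∈ range (m + 1), max ((k : ℤ) - 2 * j) 0 * k.choose j
      = ∑ j ∈ range (m + 1), (h (j + 1) - h j) := by
        refine Finset.sum_congr rfl fun j hj => ?_
        have e1 : h (j + 1) = (k : ℤ) * (k - 1).choose j := by simp [hh]
        have e2 : h j = if j = 0 then 0 else (k : ℤ) * (k - 1).choose (j - 1) := by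
          simp [hh]
        rw [hstep j hj, e1, e2]
    _ = h (m + 1) - h 0 := Finset.sum_range_sub h (m + 1)
    _ = (k : ℤ) * (k - 1).choose m := by rw [hh]; simp

lemma sum_abs (k : ℕ) (hk : 1 ≤ k) :
    ∑ j ∈ range (k + 1), (k.choose j : ℤ) * |(k : ℤ) - 2 * j| =
      2 * k * (k - 1).choose (k / 2) := by
  have habs : ∀ j ∈ range (k + 1), (k.choose j : ℤ) * |(k : ℤ) - 2 * j| =
      max ((k : ℤ) - 2 * j) 0 * k.choose j + max (2 * j - (k : ℤ)) 0 * k.choose j := by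
    intro j _
    have : |(k : ℤ) - 2 * j| = max ((k : ℤ) - 2 * j) 0 + max (2 * j - (k : ℤ)) 0 := by
      rcases le_total ((k : ℤ) - 2 * j) 0 with h | h
      · rw [abs_of_nonpos h, max_eq_right h, max_eq_left (by omega)]; ring_nf
      · rw [abs_of_nonneg h, max_eq_left h, max_eq_right (by omega)]; ring
    rw [this]; ring
  rw [Finset.sum_congr rfl habs, Finset.sum_add_distrib]
  have hrefl : ∑ j ∈ range (k + 1), max (2 * (j : ℤ) - k) 0 * k.choose j =
      ∑ j ∈ range (k + 1), max ((k : ℤ) - 2 * j) 0 * k.choose j := by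
    rw [← Finset.sum_range_reflect]
    refine Finset.sum_congr rfl fun j hj => ?_
    rw [mem_range, Nat.lt_succ_iff] at hj
    have h1 : (k + 1 - 1 - j : ℕ) = k - j := by omega
    have h2 : ((k - j : ℕ) : ℤ) = (k : ℤ) - j := by push_cast; omega
    have h3 : k.choose (k - j) = k.choose j := Nat.choose_symm hj
    rw [h1, h2, h3]
    have h4 : 2 * ((k : ℤ) - j) - k = (k : ℤ) - 2 * j := by ring
    rw [h4]
  rw [hrefl, sum_G k hk]
  ring

end Prop2Aux

open Prop2Aux in
/-- **Proposition 2(i).** If `X₁, …, X_k` are linearly independent in `𝔽₂ⁿ` and `f`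
agrees with the majority of the `q·Xᵢ` for every `q`, then
`Σᵢ C_{Xᵢ}(f)² ≥ N² · p_k` with `N = 2ⁿ`. -/
theorem prop2_i {n k : ℕ} (X : Fin k → (Fin n → ZMod 2))
    (hX : LinearIndependent (ZMod 2) X)
    (f : (Fin n → ZMod 2) → ZMod 2)
    (hf : ∀ q, k ≤ 2 * (Finset.univ.filter (fun i : Fin k => f q = dotp q (X i))).card) :
    ∑ i, (coefC f (X i) : ℚ) ^ 2 ≥ ((2 ^ n : ℚ)) ^ 2 * pSeq k := by
  rcases Nat.eq_zero_or_pos k with hk | hk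
  · subst hk
    simp [pSeq]
  set φ := phiMap X with hφ
  set K := (univ.filter fun q : Fin n → ZMod 2 => φ q = 0).card with hK
  -- each fiber has card K
  have hfib : ∀ v : Fin k → ZMod 2,
      (univ.filter fun q : Fin n → ZMod 2 => φ q = v).card = K := by
    intro v
    obtain ⟨q₀, hq₀⟩ := phi_surj X hX v
    exact fiber_card_eq φ v q₀ hq₀
  -- K * 2^k = 2^n
  have hcard : K * 2 ^ k = 2 ^ n := by
    have h1 : (univ : Finset (Fin n → ZMod 2)).card =
        ∑ v : Fin k → ZMod 2, (univ.filter fun q => φ q = v).card :=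
      Finset.card_eq_sum_card_fiberwise (fun q _ => mem_univ (φ q))
    rw [Finset.sum_congr rfl fun v _ => hfib v, Finset.sum_const, smul_eq_mul] at h1
    have h2 : (univ : Finset (Fin n → ZMod 2)).card = 2 ^ n := by
      simp [Finset.card_univ]
    have h3 : (univ : Finset (Fin k → ZMod 2)).card = 2 ^ k := by
      simp [Finset.card_univ]
    rw [h2, h3] at h1
    rw [h1, mul_comm]
  -- coefC as a sum of ±1
  have hcoef : ∀ i : Fin k, coefC f (X i) =
      ∑ q : Fin n → ZMod 2, (if φ q i = f q then (1 : ℤ) else -1) := by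
    intro i
    have : ∀ q : Fin n → ZMod 2, φ q i = dotp (X i) q := fun q =>
      (dotp_comm q (X i)) ▸ rfl
    rw [coefC]
    rw [Finset.sum_ite, Finset.sum_const, Finset.sum_const]
    have hfe : (univ.filter fun q : Fin n → ZMod 2 => φ q i = f q) =
        univ.filter fun q => dotp (X i) q = f q := by
      apply Finset.filter_congr; intro q _; rw [this q]
    have hfe' : (univ.filter fun q : Fin n → ZMod 2 => ¬ φ q i = f q) =
        univ.filter fun q => ¬ dotp (X i) q = f q := by
      apply Finset.filter_congr; intro q _; rw [this q]
    rw [hfe, hfe']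
    simp [mul_comm, sub_eq_add_neg]
  -- pointwise: ∑ i (±1) = |k - 2 wt (φ q)|
  have hpoint : ∀ q : Fin n → ZMod 2,
      ∑ i : Fin k, (if φ q i = f q then (1 : ℤ) else -1) = |(k : ℤ) - 2 * wt (φ q)| := by
    intro q
    set m := (univ.filter fun i : Fin k => φ q i = f q).card with hm
    have hsum : ∑ i : Fin k, (if φ q i = f q then (1 : ℤ) else -1) = 2 * m - k := by
      rw [Finset.sum_ite, Finset.sum_const, Finset.sum_const]
      have hneg := Finset.card_filter_add_card_filter_not
        (s := (univ : Finset (Fin k))) (p := fun i => φ q i = f q)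
      simp only [Finset.card_univ, Fintype.card_fin] at hneg
      rw [nsmul_eq_mul, nsmul_eq_mul, ← hm]
      push_cast
      omega
    have hmaj : k ≤ 2 * m := by
      have := hf q
      have heq : (univ.filter fun i : Fin k => f q = dotp q (X i)) =
          univ.filter fun i : Fin k => φ q i = f q := by
        apply Finset.filter_congr; intro i _
        constructor
        · intro h; exact h.symm
        · intro h; exact h.symm
      rwa [heq] at this
    set w := wt (φ q) with hw
    have hzw : (univ.filter fun i : Fin k => φ q i = 0).card + w = k := by
      rw [hw, wt]
      have heq : (univ.filter fun i : Fin k => φ q i = 1) =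
          univ.filter fun i : Fin k => ¬ φ q i = 0 := by
        apply Finset.filter_congr; intro i _
        rcases zmod2_cases (φ q i) with h | h <;> simp [h]
      rw [heq]
      have := Finset.card_filter_add_card_filter_not
        (s := (univ : Finset (Fin k))) (p := fun i => φ q i = 0)
      simpa using this
    have hmzw : m = (univ.filter fun i : Fin k => φ q i = 0).card ∨ m = w := by
      rcases zmod2_cases (f q) with h | h
      · left; rw [hm]; congr 1; apply Finset.filter_congr; intro i _; rw [h]
      · right; rw [hm, hw, wt]; congr 1; apply Finset.filter_congr; intro i _; rw [h]
    rw [hsum]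
    rcases abs_cases ((k : ℤ) - 2 * w) with ⟨h1, h2⟩ | ⟨h1, h2⟩ <;>
      rcases hmzw with h3 | h3 <;> push_cast <;> omega
  -- total sum of coefficients
  have htotal : ∑ i : Fin k, coefC f (X i) = (K : ℤ) * (2 * k * (k - 1).choose (k / 2)) := by
    rw [Finset.sum_congr rfl fun i _ => hcoef i, Finset.sum_comm]
    rw [Finset.sum_congr rfl fun q _ => hpoint q]
    have hfibsum : ∑ q : Fin n → ZMod 2, |(k : ℤ) - 2 * wt (φ q)| =
        ∑ v : Fin k → ZMod 2, (K : ℤ) * |(k : ℤ) - 2 * wt v| := by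
      rw [← Finset.sum_fiberwise' (s := univ) (g := φ)
        (f := fun v => |(k : ℤ) - 2 * wt v|)]
      refine Finset.sum_congr rfl fun v _ => ?_
      rw [Finset.sum_const, hfib v]
      simp
    rw [hfibsum, ← Finset.mul_sum]
    have := sum_over_vecs (k := k) (fun j => |(k : ℤ) - 2 * j|)
    rw [this, sum_abs k hk]
  -- Cauchy–Schwarz
  have hCS : (∑ i : Fin k, (coefC f (X i) : ℚ)) ^ 2 ≤
      (k : ℚ) * ∑ i : Fin k, (coefC f (X i) : ℚ) ^ 2 := by
    have := sq_sum_le_card_mul_sum_sq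
      (s := (univ : Finset (Fin k))) (f := fun i => (coefC f (X i) : ℚ))
    simpa using this
  -- assemble
  set c : ℚ := ((k - 1).choose (k / 2) : ℚ) with hc
  set S : ℚ := ∑ i : Fin k, (coefC f (X i) : ℚ) ^ 2 with hS
  have hsumQ : ∑ i : Fin k, (coefC f (X i) : ℚ) = (K : ℚ) * (2 * k * c) := by
    have := congrArg (fun z : ℤ => (z : ℚ)) htotal
    push_cast at this
    rw [hc]
    push_cast
    convert this using 2
  have hKQ : (K : ℚ) * 2 ^ k = 2 ^ n := by exact_mod_cast hcard
  have hkpos : (0 : ℚ) < k := by exact_mod_cast hk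
  have hgoal2 : ((2 : ℚ) ^ n) ^ 2 * pSeq k = 4 * k * (K : ℚ) ^ 2 * c ^ 2 := by
    rw [pSeq, ← hKQ, ← hc]
    have hpow : (2 : ℚ) ^ (k * 2) = 2 ^ (2 * (k - 1)) * 4 := by
      have hexp : k * 2 = 2 * (k - 1) + 2 := by omega
      rw [hexp, pow_add]; norm_num
    have : ((K : ℚ) * 2 ^ k) ^ 2 = (K : ℚ) ^ 2 * 2 ^ (2 * (k - 1)) * 4 := by
      rw [mul_pow, ← pow_mul, hpow]; ring
    rw [this]
    have h2 : (2 : ℚ) ^ (2 * (k - 1)) ≠ 0 := by positivity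
    field_simp
  rw [ge_iff_le, hgoal2]
  rw [hsumQ] at hCS
  have : (k : ℚ) * (4 * k * (K : ℚ) ^ 2 * c ^ 2) ≤ (k : ℚ) * S := by
    calc (k : ℚ) * (4 * k * (K : ℚ) ^ 2 * c ^ 2) = ((K : ℚ) * (2 * k * c)) ^ 2 := by ring
      _ ≤ (k : ℚ) * S := hCS
  exact le_of_mul_le_mul_left this hkpos
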